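/- Let u ∈ K with u ≠ 0 and σ(u) = −u, set s₀ := (u, 0) ∈ A and μ := u² ∈ F. Define, for x, y ∈ A, U_x(y) := 2(x·ȳ)·x − (x·x̄)·y and ψ(x, y) := x·ȳ − y·x̄. Then for all x = (s, b) ∈ A: ψ(x, U_x(s₀·x)) · s₀ = 6·μ·ν(s,b)·(1,0), where ν(s,b) := (s·σ(s) − T(b, φ(b)))² − 4·T(b♯, φ(b)♯) + 4·(γ⁻¹·s·N(b) + σ(γ⁻¹·s·N(b))). In other words, the norm of the structurable algebra A is given by ν(s,b) = (Nr(s) − T(b, φ(b)))² − 4·T(b♯, φ(b)♯) + 4·Tr(γ⁻¹·s·N(b)), where Nr and Tr denote the norm and trace of K/F. -/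

import Mathlib

/-!
Write `h(x, y)` for the `K`-component of `x ȳ`. The `J`-component of `x ȳ` is symmetric in
`x, y`, so `ψ(x, y) = (h(x, y) - σ h(x, y), 0)`, and everything reduces to the scalar
`h(x, U_x(s₀x)) = 2 h(x, (x·(s₀x)‾)·x) - h(x, (x x̄)·(s₀x))`. Both `x x̄` and `x·(s₀x)‾`
have `J`-component in the span of `b` and `φ(b)♯`, and for such `q` the value `h(x, q·(r, t b))`
is explicit once `φ` is known to be `σ`-self-adjoint for the trace, `T(φ a, c) = σ T(a, φ c)`.
That identity comes from the norm similarity `N(φ a) = δ σ(N a)`, which is where the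
reducedness of `K` enters. The outcome is
`h = 3u (s σ(s) - T(b, φ b))² + 24 u s γ⁻¹ N(b) - 12 u T(b♯, φ(b)♯)`, and
`(h - σ h) u` is the claimed `6 μ ν(s, b)`.
-/

/-- A cubic norm structure over a commutative ring `K`. -/
structure CubicNormStructure (K : Type*) [CommRing K]
    (J : Type*) [AddCommGroup J] [Module K J] where
  N : J → K
  sharp : J → J
  T : J → J → K
  one : J
  one_ne_zero : one ≠ 0
  T_add_left : ∀ a b c : J, T (a + b) c = T a c + T b c
  T_smul_left : ∀ (t : K) (a b : J), T (t • a) b = t * T a b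
  T_symm : ∀ a b : J, T a b = T b a
  sharp_smul : ∀ (t : K) (a : J), sharp (t • a) = t ^ 2 • sharp a
  N_smul : ∀ (t : K) (a : J), N (t • a) = t ^ 3 * N a
  N_add : ∀ a b : J, N (a + b) = N a + T b (sharp a) + T a (sharp b) + N b
  sharp_sharp : ∀ a : J, sharp (sharp a) = N a • a
  sharp_one : sharp one = one
  one_cross : ∀ b : J, b = T b one • one - (sharp (one + b) - sharp one - sharp b)

namespace CubicNormStructure

variable {K : Type*} [CommRing K] {J : Type*} [AddCommGroup J] [Module K J]

/-- The linearization `a × b` of the adjoint map. -/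
def cross (S : CubicNormStructure K J) (a b : J) : J :=
  S.sharp (a + b) - S.sharp a - S.sharp b

/-- The `U`-operator `U_a(b) = T(a,b)•a − a♯ × b`. -/
def U (S : CubicNormStructure K J) (a b : J) : J :=
  S.T a b • a - S.cross (S.sharp a) b

end CubicNormStructure

section AAlgebra

variable {K : Type*} [CommRing K] {J : Type*} [AddCommGroup J] [Module K J]

/-- The multiplication of the algebra `A = K ⊕ J` of Theorem 3.3:
`(s,b)(t,c) = (st + T(b, φ(c)), s•c + σ(t)•b + γ•(φ(b) × φ(c)))`. -/
def Amul (S : CubicNormStructure K J) (σ : K → K) (φ : J → J) (γ : K)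
    (x y : K × J) : K × J :=
  (x.1 * y.1 + S.T x.2 (φ y.2),
    x.1 • y.2 + σ y.1 • x.2 + γ • S.cross (φ x.2) (φ y.2))

/-- The involution of `A = K ⊕ J`: `(s,b)‾ = (σ(s), b)`. -/
def Abar (σ : K → K) (x : K × J) : K × J := (σ x.1, x.2)

end AAlgebra

/-- The operator `V_{x,y}(z) = (x·ȳ)·z + (z·ȳ)·x − (z·x̄)·y`. -/
def AV {A : Type*} [AddCommGroup A] (mul : A → A → A) (bar : A → A)
    (x y z : A) : A :=
  mul (mul x (bar y)) z + mul (mul z (bar y)) x - mul (mul z (bar x)) y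

/-- `A`, equipped with the bilinear multiplication `mul`, unit `one` and
`F`-linear involution `bar`, is a structurable `F`-algebra: `bar` is an additive,
`F`-linear involution with `(xy)‾ = ȳ x̄`, `mul` is `F`-bilinear with unit `one`,
and the structurable identity `[V_{x,y}, V_{z,w}] = V_{V_{x,y}z, w} − V_{z, V_{y,x}w}`
holds (stated pointwise). -/
def IsStructurable (F : Type*) [Field F] {A : Type*} [AddCommGroup A] [Module F A]
    (mul : A → A → A) (bar : A → A) (one : A) : Prop :=
  (∀ x y, bar (x + y) = bar x + bar y) ∧
  (∀ (c : F) (x), bar (c • x) = c • bar x) ∧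
  (∀ x, bar (bar x) = x) ∧
  (∀ x y, bar (mul x y) = mul (bar y) (bar x)) ∧
  (∀ x y z, mul (x + y) z = mul x z + mul y z) ∧
  (∀ x y z, mul x (y + z) = mul x y + mul x z) ∧
  (∀ (c : F) (x y), mul (c • x) y = c • mul x y) ∧
  (∀ (c : F) (x y), mul x (c • y) = c • mul x y) ∧
  (∀ x, mul one x = x ∧ mul x one = x) ∧
  (∀ x y z w v,
    AV mul bar x y (AV mul bar z w v) - AV mul bar z w (AV mul bar x y v) =
    AV mul bar (AV mul bar x y z) w v - AV mul bar z (AV mul bar y x w) v)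

/-- The skew elements of `(A, bar)` form a one-dimensional `F`-subspace. -/
def SkewDimOne (F : Type*) [Field F] {A : Type*} [AddCommGroup A] [Module F A]
    (bar : A → A) : Prop :=
  ∃ s₀ : A, bar s₀ = -s₀ ∧ s₀ ≠ 0 ∧ ∀ x, bar x = -x → ∃ c : F, x = c • s₀

/-- `ψ(x,y) = x·ȳ − y·x̄`. -/
def Apsi {A : Type*} [AddCommGroup A] (mul : A → A → A) (bar : A → A)
    (x y : A) : A :=
  mul x (bar y) - mul y (bar x)

/-- `U_x(y) = 2(x·ȳ)·x − (x·x̄)·y`. -/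
def AUop {A : Type*} [AddCommGroup A] (mul : A → A → A) (bar : A → A)
    (x y : A) : A :=
  2 • mul (mul x (bar y)) x - mul (mul x (bar x)) y

namespace CubicNormStructure

variable {K : Type*} [CommRing K] {J : Type*} [AddCommGroup J] [Module K J]
  (S : CubicNormStructure K J)

lemma T_add_right (a b c : J) : S.T a (b + c) = S.T a b + S.T a c := by
  rw [S.T_symm, S.T_add_left, S.T_symm b, S.T_symm c]

lemma T_smul_right (t : K) (a b : J) : S.T a (t • b) = t * S.T a b := by
  rw [S.T_symm, S.T_smul_left, S.T_symm b]

lemma T_neg_left (a b : J) : S.T (-a) b = -S.T a b := by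
  rw [← neg_one_smul K a, S.T_smul_left, neg_one_mul]

lemma T_sub_left (a b c : J) : S.T (a - b) c = S.T a c - S.T b c := by
  rw [sub_eq_add_neg, S.T_add_left, S.T_neg_left, sub_eq_add_neg]

lemma T_sub_right (a b c : J) : S.T a (b - c) = S.T a b - S.T a c := by
  rw [S.T_symm, S.T_sub_left, S.T_symm b, S.T_symm c]

lemma T_zero_left (a : J) : S.T 0 a = 0 := by
  simpa using S.T_smul_left 0 0 a

lemma T_zero_right (a : J) : S.T a 0 = 0 := by
  rw [S.T_symm, S.T_zero_left]

lemma sharp_zero : S.sharp 0 = 0 := by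
  simpa using S.sharp_smul 0 0

lemma sharp_neg (a : J) : S.sharp (-a) = S.sharp a := by
  simpa using S.sharp_smul (-1) a

lemma N_neg (a : J) : S.N (-a) = -S.N a := by
  simpa [Odd.neg_one_pow (by decide : Odd 3)] using S.N_smul (-1) a

lemma sharp_add (a b : J) : S.sharp (a + b) = S.sharp a + S.sharp b + S.cross a b := by
  rw [cross]; abel

lemma cross_comm (a b : J) : S.cross a b = S.cross b a := by
  rw [cross, cross, add_comm a b]; abel

lemma cross_zero_left (a : J) : S.cross 0 a = 0 := by
  rw [cross, zero_add, S.sharp_zero]; abel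

lemma cross_smul_self (t : K) (a : J) : S.cross a (t • a) = (2 * t) • S.sharp a := by
  rw [cross, show a + t • a = (1 + t) • a by module, S.sharp_smul, S.sharp_smul]
  module

lemma cross_self (a : J) : S.cross a a = (2 : K) • S.sharp a := by
  simpa using S.cross_smul_self 1 a

/-- The trilinear form `T(c, a × b)` is the polarization of `N`, hence symmetric. -/
lemma T_cross_cycle (a b c : J) : S.T c (S.cross a b) = S.T a (S.cross b c) := by
  have h1 := S.N_add (a + b) c
  have h2 := S.N_add a (b + c)
  rw [add_assoc, S.N_add a b, S.sharp_add a b, S.T_add_right, S.T_add_right,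
    S.T_add_left a b] at h1
  rw [S.N_add b c, S.sharp_add b c, S.T_add_left b c, S.T_add_right, S.T_add_right] at h2
  linear_combination h2 - h1

lemma T_cross_smul_right (t : K) (a b : J) :
    S.T a (S.cross b (t • a)) = 2 * t * S.T b (S.sharp a) := by
  rw [S.T_cross_cycle, S.cross_comm, S.cross_smul_self, S.T_smul_right, S.T_symm]

lemma T_sharp_self (h2 : IsUnit (2 : K)) (a : J) : S.T a (S.sharp a) = 3 * S.N a := by
  have h := S.N_add a a
  rw [← two_smul K a, S.N_smul] at h
  exact h2.mul_left_cancel (by linear_combination -h)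

lemma N_add_add_N_sub (a b : J) :
    S.N (a + b) + S.N (a - b) = 2 * S.N a + 2 * S.T a (S.sharp b) := by
  rw [sub_eq_add_neg, S.N_add, S.N_add, S.sharp_neg, S.T_neg_left, S.N_neg]
  ring

lemma T_eq_T_one_mul_T_one_sub (a b : J) :
    S.T a b = S.T b S.one * S.T a S.one - S.T S.one (S.cross b a) := by
  conv_lhs => rw [S.one_cross b]
  rw [← cross, S.T_sub_right, S.T_smul_right, S.T_cross_cycle]

lemma sq_mul_N_eq_zero_of_smul_eq_zero (h6 : IsUnit (6 : K)) {t : K} {a : J}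
    (ht : t • a = 0) : t ^ 2 * S.N a = 0 := by
  have e1 := S.N_smul (1 + t) a
  have e2 := S.N_smul (1 - t) a
  rw [add_smul, one_smul, ht, add_zero] at e1
  rw [sub_smul, one_smul, ht, sub_zero] at e2
  exact h6.mul_left_cancel (by linear_combination -e1 - e2)

end CubicNormStructure

section Autotopy

variable {K : Type*} [CommRing K] {J : Type*} [AddCommGroup J] [Module K J]
  {G : Type*} [FunLike G K K]

lemma CubicNormStructure.map_T_map_self {S : CubicNormStructure K J} {σ : G} {φ : J → J}
    (hT : ∀ a c, S.T (φ a) c = σ (S.T a (φ c))) (a : J) :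
    σ (S.T a (φ a)) = S.T a (φ a) := by
  rw [← hT, S.T_symm]

lemma map_eq_of_mul_map_eq_ringInverse [RingHomClass G K K] {σ : G}
    (hσ : Function.Involutive σ) {γ d : K} (hd : IsUnit d) (hγ : γ * σ γ = Ring.inverse d) :
    σ d = d := by
  have h := congrArg σ hγ
  rw [map_mul, hσ, mul_comm, hγ] at h
  calc σ d = σ d * (Ring.inverse d * d) := by rw [Ring.inverse_mul_cancel _ hd, mul_one]
    _ = σ (d * Ring.inverse d) * d := by rw [map_mul, ← h]; ring
    _ = d := by rw [Ring.mul_inverse_cancel _ hd, map_one, one_mul]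

/-- Self-adjointness `φ⁻¹ ∘ U_{φ 1} = φ` is encoded as `φ ∘ φ = U_{φ 1}`. -/
structure IsSelfAdjointAutotopy (S : CubicNormStructure K J) (σ : G) (φ : J → J) : Prop where
  bijective : Function.Bijective φ
  map_add : ∀ a b, φ (a + b) = φ a + φ b
  map_smul : ∀ (t : K) a, φ (t • a) = σ t • φ a
  isUnit_N_map_one : IsUnit (S.N (φ S.one))
  map_sharp : ∀ a, φ (S.sharp a) =
    Ring.inverse (S.N (φ S.one)) • S.U (φ S.one) (S.sharp (φ a))
  map_map : ∀ b, φ (φ b) = S.U (φ S.one) b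

namespace IsSelfAdjointAutotopy

variable {S : CubicNormStructure K J} {σ : G} {φ : J → J}

lemma map_zero (hφ : IsSelfAdjointAutotopy S σ φ) : φ 0 = 0 :=
  (AddMonoidHom.mk' φ hφ.map_add).map_zero

lemma map_sub (hφ : IsSelfAdjointAutotopy S σ φ) (a b : J) : φ (a - b) = φ a - φ b :=
  (AddMonoidHom.mk' φ hφ.map_add).map_sub a b

lemma map_sharp_map (hφ : IsSelfAdjointAutotopy S σ φ)
    (hδ : σ (S.N (φ S.one)) = S.N (φ S.one)) (a : J) :
    φ (S.sharp (φ a)) = S.N (φ S.one) • S.sharp a := by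
  apply hφ.bijective.1
  rw [hφ.map_map, hφ.map_smul, hδ, hφ.map_sharp a, smul_smul,
    Ring.mul_inverse_cancel _ hφ.isUnit_N_map_one, one_smul]

lemma sharp_map_eq_smul_of_map_eq (hφ : IsSelfAdjointAutotopy S σ φ)
    (hδ : σ (S.N (φ S.one)) = S.N (φ S.one)) {a c : J} (hc : φ c = S.sharp a) :
    S.sharp (φ a) = S.N (φ S.one) • c :=
  hφ.bijective.1 <| by rw [hφ.map_sharp_map hδ, hφ.map_smul, hδ, hc]

lemma T_map_smul_add_smul_sharp_map (hφ : IsSelfAdjointAutotopy S σ φ)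
    (hδ : σ (S.N (φ S.one)) = S.N (φ S.one)) (h2 : IsUnit (2 : K)) (α β : K) (b : J) :
    S.T b (φ (α • b + β • S.sharp (φ b))) =
      σ α * S.T b (φ b) + 3 * σ β * S.N (φ S.one) * S.N b := by
  rw [hφ.map_add, hφ.map_smul, hφ.map_smul, hφ.map_sharp_map hδ, S.T_add_right,
    S.T_smul_right, S.T_smul_right, S.T_smul_right, S.T_sharp_self h2]
  ring

variable [RingHomClass G K K]

/-- `t := N (φ a) - δ σ (N a)` satisfies `t • φ a = 0`, so `t²` kills `N (φ a)` and
`σ (N a)`, whence `t³ = 0`. -/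
lemma N_map (hφ : IsSelfAdjointAutotopy S σ φ) (hσ : Function.Involutive σ)
    (hδ : σ (S.N (φ S.one)) = S.N (φ S.one)) [IsReduced K] (h6 : IsUnit (6 : K)) (a : J) :
    S.N (φ a) = S.N (φ S.one) * σ (S.N a) := by
  set δ := S.N (φ S.one)
  obtain ⟨c, hc⟩ := hφ.bijective.2 (S.sharp a)
  have hsharp_c : δ • S.sharp c = σ (S.N a) • φ a := by
    rw [← hφ.map_sharp_map hδ c, hc, S.sharp_sharp, hφ.map_smul]
  set t := S.N (φ a) - δ * σ (S.N a) with ht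
  have hann : t • φ a = 0 := by
    rw [sub_smul, ← S.sharp_sharp, hφ.sharp_map_eq_smul_of_map_eq hδ hc, S.sharp_smul,
      pow_two, mul_smul, hsharp_c, smul_smul, sub_self]
  have hann' : σ t • a = 0 := hφ.bijective.1 <| by
    rw [hφ.map_smul, hσ, hann, hφ.map_zero]
  have k1 := S.sq_mul_N_eq_zero_of_smul_eq_zero h6 hann
  have k2 := congrArg σ (S.sq_mul_N_eq_zero_of_smul_eq_zero h6 hann')
  rw [map_mul, map_pow, hσ, _root_.map_zero] at k2
  have ht3 : t ^ 3 = 0 := by linear_combination t ^ 2 * ht + k1 - δ * k2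
  exact sub_eq_zero.mp (IsReduced.eq_zero t ⟨3, ht3⟩)

lemma T_map_sharp_map (hφ : IsSelfAdjointAutotopy S σ φ) (hσ : Function.Involutive σ)
    (hδ : σ (S.N (φ S.one)) = S.N (φ S.one)) [IsReduced K] (h2 : IsUnit (2 : K))
    (h6 : IsUnit (6 : K)) (a b : J) :
    S.T (φ a) (S.sharp (φ b)) = S.N (φ S.one) * σ (S.T a (S.sharp b)) := by
  have hpol := S.N_add_add_N_sub (φ a) (φ b)
  rw [← hφ.map_add, ← hφ.map_sub, hφ.N_map hσ hδ h6 (a + b), hφ.N_map hσ hδ h6 (a - b),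
    hφ.N_map hσ hδ h6 a] at hpol
  have h := congrArg σ (S.N_add_add_N_sub a b)
  simp only [_root_.map_add, map_mul, map_ofNat] at h
  exact h2.mul_left_cancel (by linear_combination -hpol + S.N (φ S.one) * h)

lemma T_map_cross_map (hφ : IsSelfAdjointAutotopy S σ φ) (hσ : Function.Involutive σ)
    (hδ : σ (S.N (φ S.one)) = S.N (φ S.one)) [IsReduced K] (h2 : IsUnit (2 : K))
    (h6 : IsUnit (6 : K)) (a b c : J) :
    S.T (φ a) (S.cross (φ b) (φ c)) = S.N (φ S.one) * σ (S.T a (S.cross b c)) := by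
  have h := hφ.T_map_sharp_map hσ hδ h2 h6 a (b + c)
  rw [hφ.map_add, S.sharp_add, S.sharp_add, S.T_add_right, S.T_add_right, S.T_add_right,
    S.T_add_right, hφ.T_map_sharp_map hσ hδ h2 h6, hφ.T_map_sharp_map hσ hδ h2 h6,
    _root_.map_add, _root_.map_add] at h
  linear_combination h

lemma T_map_one (hφ : IsSelfAdjointAutotopy S σ φ) (hσ : Function.Involutive σ)
    (hδ : σ (S.N (φ S.one)) = S.N (φ S.one)) [IsReduced K] (h2 : IsUnit (2 : K))
    (h6 : IsUnit (6 : K)) (a : J) : S.T (φ a) S.one = σ (S.T a (φ S.one)) := by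
  obtain ⟨w, hw⟩ := hφ.bijective.2 S.one
  have hw_sharp : φ S.one = S.N (φ S.one) • S.sharp w := by
    rw [← hφ.map_sharp_map hδ, hw, S.sharp_one]
  have h := hφ.T_map_sharp_map hσ hδ h2 h6 a w
  rw [hw, S.sharp_one] at h
  conv_rhs => rw [hw_sharp, S.T_smul_right, map_mul, hδ]
  exact h

lemma T_map (hφ : IsSelfAdjointAutotopy S σ φ) (hσ : Function.Involutive σ)
    (hδ : σ (S.N (φ S.one)) = S.N (φ S.one)) [IsReduced K] (h2 : IsUnit (2 : K))
    (h6 : IsUnit (6 : K)) (a c : J) : S.T (φ a) c = σ (S.T a (φ c)) := by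
  obtain ⟨c, rfl⟩ := hφ.bijective.2 c
  obtain ⟨w, hw⟩ := hφ.bijective.2 S.one
  have hz_sharp : S.sharp (φ S.one) = S.N (φ S.one) • w :=
    hφ.sharp_map_eq_smul_of_map_eq hδ (hw.trans S.sharp_one.symm)
  have hcross := hφ.T_map_cross_map hσ hδ h2 h6 w c a
  rw [hw] at hcross
  have hlhs := S.T_eq_T_one_mul_T_one_sub (φ a) (φ c)
  rw [hφ.T_map_one hσ hδ h2 h6, hφ.T_map_one hσ hδ h2 h6, hcross] at hlhs
  have hrhs : S.T a (φ (φ c)) = S.T (φ S.one) c * S.T a (φ S.one)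
      - S.N (φ S.one) * S.T w (S.cross c a) := by
    rw [hφ.map_map, CubicNormStructure.U, S.T_sub_right, S.T_smul_right, hz_sharp,
      S.T_cross_cycle, S.T_smul_left]
  rw [hlhs, hrhs, _root_.map_sub, map_mul, map_mul, hδ, S.T_symm (φ S.one) c]

lemma map_T_sharp_sharp_map (hφ : IsSelfAdjointAutotopy S σ φ)
    (hδ : σ (S.N (φ S.one)) = S.N (φ S.one)) (hT : ∀ a c, S.T (φ a) c = σ (S.T a (φ c)))
    (b : J) : σ (S.T (S.sharp b) (S.sharp (φ b))) = S.T (S.sharp b) (S.sharp (φ b)) := by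
  have h := hT (S.sharp (φ b)) (S.sharp (φ b))
  rw [hφ.map_sharp_map hδ, S.T_smul_left, S.T_smul_right, map_mul, hδ,
    S.T_symm _ (S.sharp b)] at h
  exact (hφ.isUnit_N_map_one.mul_left_cancel h).symm

lemma T_map_cross_map_smul (hφ : IsSelfAdjointAutotopy S σ φ) (hσ : Function.Involutive σ)
    (hδ : σ (S.N (φ S.one)) = S.N (φ S.one)) (hT : ∀ a c, S.T (φ a) c = σ (S.T a (φ c)))
    (t : K) (b c : J) :
    S.T b (φ (S.cross (φ c) (t • φ b))) = 2 * σ t * S.N (φ S.one) * S.T c (S.sharp b) := by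
  rw [← hσ (S.T b _), ← hT, S.T_cross_smul_right, hT, hφ.map_sharp_map hδ, S.T_smul_right]
  simp only [map_mul, map_ofNat, hδ]
  rw [hσ]
  ring

end IsSelfAdjointAutotopy

end Autotopy

section StructurableAlgebra

variable {K : Type*} [CommRing K] {J : Type*} [AddCommGroup J] [Module K J]
  {G : Type*} [FunLike G K K]
  {S : CubicNormStructure K J} {σ : G} {φ : J → J}

/-- The `K`-component of `x ȳ` in `A = K ⊕ J`. -/
def hermForm (S : CubicNormStructure K J) (σ : K → K) (φ : J → J) (x y : K × J) : K :=
  x.1 * σ y.1 + S.T x.2 (φ y.2)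

lemma Amul_mk_zero_left (hφ : IsSelfAdjointAutotopy S σ φ) (γ u s : K) (b : J) :
    Amul S σ φ γ (u, 0) (s, b) = (u * s, u • b) := by
  simp [Amul, hφ.map_zero, S.T_zero_left, S.cross_zero_left]

lemma Amul_Abar_self (hσ : Function.Involutive σ) (γ s : K) (b : J) :
    Amul S σ φ γ (s, b) (Abar σ (s, b)) =
      (s * σ s + S.T b (φ b), (2 * s) • b + (2 * γ) • S.sharp (φ b)) := by
  simp only [Amul, Abar, hσ _, S.cross_self, Prod.mk.injEq, true_and]
  module

variable [RingHomClass G K K]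

/-- The `J`-component of `x ȳ` is symmetric in `x` and `y`, so `ψ(x, y)` lies in `K`. -/
lemma Amul_Apsi_mk_zero (hφ : IsSelfAdjointAutotopy S σ φ) (hσ : Function.Involutive σ)
    (hT : ∀ a c, S.T (φ a) c = σ (S.T a (φ c))) (γ u : K) (x y : K × J) :
    Amul S σ φ γ (Apsi (Amul S σ φ γ) (Abar σ) x y) (u, 0) =
      ((hermForm S σ φ x y - σ (hermForm S σ φ x y)) * u, 0) := by
  have hfst : (Apsi (Amul S σ φ γ) (Abar σ) x y).1 =
      hermForm S σ φ x y - σ (hermForm S σ φ x y) := by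
    simp only [Apsi, Amul, Abar, Prod.fst_sub, hermForm, _root_.map_add, map_mul, hσ _,
      S.T_symm y.2, hT]
    ring
  have hsnd : (Apsi (Amul S σ φ γ) (Abar σ) x y).2 = 0 := by
    simp only [Apsi, Amul, Abar, Prod.snd_sub, hσ _, S.cross_comm (φ y.2)]
    abel
  rw [show Apsi (Amul S σ φ γ) (Abar σ) x y =
      (hermForm S σ φ x y - σ (hermForm S σ φ x y), 0) from Prod.ext hfst hsnd]
  simp [Amul, hφ.map_zero, S.T_zero_right, S.cross_zero_left]

lemma Amul_Abar_skew_mul (hφ : IsSelfAdjointAutotopy S σ φ) (hσ : Function.Involutive σ)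
    {u : K} (hu : σ u = -u) (γ s : K) (b : J) :
    Amul S σ φ γ (s, b) (Abar σ (u * s, u • b)) =
      (-(u * (s * σ s + S.T b (φ b))),
        (2 * (u * s)) • b + (-(2 * (u * γ))) • S.sharp (φ b)) := by
  simp only [Amul, Abar, hσ _, hφ.map_smul, hu, map_mul, map_neg, S.T_smul_right,
    S.cross_smul_self, Prod.mk.injEq]
  constructor
  · ring
  · module

lemma hermForm_Amul_mk_smul (hφ : IsSelfAdjointAutotopy S σ φ) (hσ : Function.Involutive σ)
    (hδ : σ (S.N (φ S.one)) = S.N (φ S.one)) (hT : ∀ a c, S.T (φ a) c = σ (S.T a (φ c)))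
    (γ s r t : K) {b c : J} (hc : c = t • b) (q : K × J) :
    hermForm S σ φ (s, b) (Amul S σ φ γ q (r, c)) =
      σ q.1 * (s * σ r + σ t * S.T b (φ b)) + (s * t + r) * S.T b (φ q.2)
        + 2 * t * σ γ * S.N (φ S.one) * S.T q.2 (S.sharp b) := by
  subst hc
  simp only [hermForm, Amul, hφ.map_add, hφ.map_smul, S.T_add_right, S.T_smul_right,
    hφ.T_map_cross_map_smul hσ hδ hT, _root_.map_add, map_mul, hσ _, hT, S.T_symm q.2]
  ring

lemma hermForm_AUop (hφ : IsSelfAdjointAutotopy S σ φ) (mul : K × J → K × J → K × J)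
    (bar : K × J → K × J) (x y : K × J) :
    hermForm S σ φ x (AUop mul bar x y) =
      2 * hermForm S σ φ x (mul (mul x (bar y)) x)
        - hermForm S σ φ x (mul (mul x (bar x)) y) := by
  simp only [hermForm, AUop, two_nsmul, Prod.fst_sub, Prod.snd_sub, Prod.fst_add, Prod.snd_add,
    hφ.map_sub, hφ.map_add, _root_.map_sub, _root_.map_add, S.T_sub_right, S.T_add_right]
  ring

lemma hermForm_AUop_skew_mul (hφ : IsSelfAdjointAutotopy S σ φ) (hσ : Function.Involutive σ)
    (hδ : σ (S.N (φ S.one)) = S.N (φ S.one)) (hT : ∀ a c, S.T (φ a) c = σ (S.T a (φ c)))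
    (h2 : IsUnit (2 : K)) {u γ : K} (hu : σ u = -u) (hγ : γ * (σ γ * S.N (φ S.one)) = 1)
    (s : K) (b : J) :
    hermForm S σ φ (s, b)
        (AUop (Amul S σ φ γ) (Abar σ) (s, b) (Amul S σ φ γ (u, 0) (s, b))) =
      3 * u * (s * σ s - S.T b (φ b)) ^ 2 + 24 * u * s * (σ γ * S.N (φ S.one)) * S.N b
        - 12 * u * S.T (S.sharp b) (S.sharp (φ b)) := by
  rw [hermForm_AUop hφ, Amul_mk_zero_left hφ, Amul_Abar_skew_mul hφ hσ hu, Amul_Abar_self hσ,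
    hermForm_Amul_mk_smul hφ hσ hδ hT γ s s 1 (one_smul K b).symm,
    hermForm_Amul_mk_smul hφ hσ hδ hT γ s (u * s) u rfl]
  simp only [hφ.T_map_smul_add_smul_sharp_map hδ h2, S.T_add_left, S.T_smul_left,
    S.T_sharp_self h2, S.T_symm (S.sharp (φ b)), map_add, map_mul, map_neg, map_one, map_ofNat, hu,
    hσ _, S.map_T_map_self hT]
  linear_combination (-12 * u * S.T (S.sharp b) (S.sharp (φ b))) * hγ

end StructurableAlgebra

theorem stmt12_general {F : Type*} [Field F] (h2 : (2 : F) ≠ 0) (h3 : (3 : F) ≠ 0)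
    {K : Type*} [CommRing K] [Algebra F K]
    (hred : ∀ t : K, t * t = 0 → t = 0)
    (σ : K ≃ₐ[F] K)
    (hσσ : ∀ t : K, σ (σ t) = t)
    (hfix : ∀ t : K, σ t = t ↔ ∃ c : F, t = algebraMap F K c)
    {J : Type*} [AddCommGroup J] [Module K J] [Module F J] [IsScalarTower F K J]
    (S : CubicNormStructure K J)
    (φ : J → J)
    (hbij : Function.Bijective φ)
    (hadd : ∀ a b : J, φ (a + b) = φ a + φ b)
    (hsemi : ∀ (t : K) (a : J), φ (t • a) = σ t • φ a)
    (hinv : IsUnit (S.N (φ S.one)))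
    (haut : ∀ a : J, φ (S.sharp a) =
      Ring.inverse (S.N (φ S.one)) • S.U (φ S.one) (S.sharp (φ a)))
    (hself : ∀ b : J, φ (φ b) = S.U (φ S.one) b)
    (γ : K) (hγ : γ * σ γ = Ring.inverse (S.N (φ S.one)))
    (u : K) (huskew : σ u = -u) :
    (∃ μ : F, algebraMap F K μ = u ^ 2) ∧
    ∀ (s : K) (b : J),
      Amul S (⇑σ) φ γ
        (Apsi (Amul S (⇑σ) φ γ) (Abar (⇑σ)) ((s, b) : K × J)
          (AUop (Amul S (⇑σ) φ γ) (Abar (⇑σ)) ((s, b) : K × J)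
            (Amul S (⇑σ) φ γ ((u, 0) : K × J) ((s, b) : K × J))))
        ((u, 0) : K × J) =
      ((6 : K) * u ^ 2 *
        ((s * σ s - S.T b (φ b)) ^ 2 - 4 * S.T (S.sharp b) (S.sharp (φ b)) +
          4 * (Ring.inverse γ * s * S.N b + σ (Ring.inverse γ * s * S.N b))),
        (0 : J)) := by
  have h2K : IsUnit (2 : K) := by
    simpa only [map_ofNat] using (isUnit_iff_ne_zero.mpr h2).map (algebraMap F K)
  have h3K : IsUnit (3 : K) := by
    simpa only [map_ofNat] using (isUnit_iff_ne_zero.mpr h3).map (algebraMap F K)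
  have h6K : IsUnit (6 : K) := by simpa only [show (2 : K) * 3 = 6 by norm_num] using h2K.mul h3K
  have : IsReduced K :=
    (isReduced_iff_pow_one_lt 2 one_lt_two).mpr fun t ht => hred t (by rwa [← sq])
  have hφ : IsSelfAdjointAutotopy S σ φ := ⟨hbij, hadd, hsemi, hinv, haut, hself⟩
  have hδ := map_eq_of_mul_map_eq_ringInverse hσσ hinv hγ
  have hT := hφ.T_map hσσ hδ h2K h6K
  have hγδ : γ * (σ γ * S.N (φ S.one)) = 1 := by
    rw [← mul_assoc, hγ, Ring.inverse_mul_cancel _ hinv]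
  have hγinv : Ring.inverse γ = σ γ * S.N (φ S.one) := by
    simpa using (Ring.inverse_mul_eq_iff_eq_mul γ 1 _ (.of_mul_eq_one _ hγδ)).mpr hγδ.symm
  refine ⟨?_, fun s b => ?_⟩
  · obtain ⟨μ, hμ⟩ := (hfix (u ^ 2)).mp (by rw [map_pow, huskew, neg_sq])
    exact ⟨μ, hμ.symm⟩
  rw [Amul_Apsi_mk_zero hφ hσσ hT, hermForm_AUop_skew_mul hφ hσσ hδ hT h2K huskew hγδ,
    hγinv]
  simp only [map_sub, map_add, map_mul, map_pow, map_ofNat, huskew, hσσ, hδ,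
    S.map_T_map_self hT, hφ.map_T_sharp_sharp_map hδ hT, Prod.mk.injEq, and_true]
  ring

/-- Proposition 3.6: the norm of the structurable algebra `A = K ⊕ J` is
`ν(s,b) = (Nr(s) − T(b, φ(b)))² − 4T(b♯, φ(b)♯) + 4Tr(γ⁻¹ s N(b))`, in the sense
that `ψ(x, U_x(s₀x))·s₀ = 6μ·ν(s,b)·(1,0)` for every `x = (s,b)`, where
`s₀ = (u,0)` is skew and `μ = u² ∈ F`. -/
theorem stmt12 {F : Type*} [Field F] (h2 : (2 : F) ≠ 0) (h3 : (3 : F) ≠ 0)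
    {K : Type*} [CommRing K] [Algebra F K]
    (hdim : Module.finrank F K = 2)
    (hred : ∀ t : K, t * t = 0 → t = 0)
    (σ : K ≃ₐ[F] K)
    (hσσ : ∀ t : K, σ (σ t) = t)
    (hfix : ∀ t : K, σ t = t ↔ ∃ c : F, t = algebraMap F K c)
    {J : Type*} [AddCommGroup J] [Module K J] [Module F J] [IsScalarTower F K J]
    (S : CubicNormStructure K J)
    (φ : J → J)
    (hbij : Function.Bijective φ)
    (hadd : ∀ a b : J, φ (a + b) = φ a + φ b)
    (hsemi : ∀ (t : K) (a : J), φ (t • a) = σ t • φ a)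
    (hinv : IsUnit (S.N (φ S.one)))
    (haut : ∀ a : J, φ (S.sharp a) =
      Ring.inverse (S.N (φ S.one)) • S.U (φ S.one) (S.sharp (φ a)))
    (hself : ∀ b : J, φ (φ b) = S.U (φ S.one) b)
    (γ : K) (hγ : γ * σ γ = Ring.inverse (S.N (φ S.one)))
    (u : K) (hu : u ≠ 0) (huskew : σ u = -u) :
    (∃ μ : F, algebraMap F K μ = u ^ 2) ∧
    ∀ (s : K) (b : J),
      Amul S (⇑σ) φ γ
        (Apsi (Amul S (⇑σ) φ γ) (Abar (⇑σ)) ((s, b) : K × J)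
          (AUop (Amul S (⇑σ) φ γ) (Abar (⇑σ)) ((s, b) : K × J)
            (Amul S (⇑σ) φ γ ((u, 0) : K × J) ((s, b) : K × J))))
        ((u, 0) : K × J) =
      ((6 : K) * u ^ 2 *
        ((s * σ s - S.T b (φ b)) ^ 2 - 4 * S.T (S.sharp b) (S.sharp (φ b)) +
          4 * (Ring.inverse γ * s * S.N b + σ (Ring.inverse γ * s * S.N b))),
        (0 : J)) :=
  stmt12_general h2 h3 hred σ hσσ hfix S φ hbij hadd hsemi hinv haut hself γ hγ u huskew
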